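/- The product over 1 ≤ k < j ≤ n of |exp(iπ(j-1)/n) - exp(iπ(k-1)/n)| equals 2^{n(n-1)/2} · ∏_{j=1}^{n-1} sin(jπ/(2n))^{n-j}. -/

import Mathlib

/-! The chord between `exp (i a)` and `exp (i b)` has length `2 |sin ((a - b) / 2)|`, so the factor
indexed by `k < j` is `2 sin ((j - k) π / (2 n))` and depends only on the gap `d = j - k`. Each gap
`1 ≤ d ≤ n - 1` occurs for `n - d` pairs, and the factors `2` contribute `2` to the power of the
number of pairs, `n (n - 1) / 2`. -/

open Finset Real

theorem Complex.norm_exp_I_mul_ofReal_sub_exp_I_mul_ofReal (a b : ℝ) :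
    ‖Complex.exp (Complex.I * a) - Complex.exp (Complex.I * b)‖ = 2 * |Real.sin ((a - b) / 2)| := by
  have h : Complex.exp (Complex.I * a) - Complex.exp (Complex.I * b) =
      Complex.exp (Complex.I * b) * (Complex.exp (Complex.I * (a - b : ℝ)) - 1) := by
    rw [mul_sub, mul_one, ← Complex.exp_add]
    push_cast
    ring_nf
  rw [h, norm_mul, Complex.norm_exp_I_mul_ofReal, one_mul, Complex.norm_exp_I_mul_ofReal_sub_one,
    norm_mul, Real.norm_two, Real.norm_eq_abs]

theorem norm_exp_pi_mul_I_div_sub_exp (n : ℕ) {j k : ℕ} (hkj : k ≤ j) (hjk : j - k ≤ 2 * n) :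
    ‖Complex.exp (π * Complex.I * j / n) - Complex.exp (π * Complex.I * k / n)‖ =
      2 * sin ((j - k : ℕ) * π / (2 * n)) := by
  have hI (m : ℕ) : (π : ℂ) * Complex.I * m / n = Complex.I * (π * m / n : ℝ) := by
    push_cast; ring
  rw [hI, hI, Complex.norm_exp_I_mul_ofReal_sub_exp_I_mul_ofReal]
  have harg : (π * j / n - π * k / n) / 2 = (j - k : ℕ) * π / (2 * n) := by
    rw [Nat.cast_sub hkj]; ring
  rw [harg, abs_of_nonneg]
  apply sin_nonneg_of_nonneg_of_le_pi (by positivity)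
  rcases Nat.eq_zero_or_pos n with rfl | hn
  · simp [pi_pos.le]
  · have hd : ((j - k : ℕ) : ℝ) ≤ 2 * n := by exact_mod_cast hjk
    rw [div_le_iff₀ (by positivity)]
    nlinarith [pi_pos]

theorem Finset.prod_range_prod_range_sub {M : Type*} [CommMonoid M] (g : ℕ → M) (n : ℕ) :
    ∏ j ∈ range n, ∏ k ∈ range j, g (j - k) = ∏ d ∈ Icc 1 (n - 1), g d ^ (n - d) := by
  have hreflect (j : ℕ) : ∏ k ∈ range j, g (j - k) = ∏ d ∈ Icc 1 j, g d := by
    rw [← prod_range_reflect, ← Ico_add_one_right_eq_Icc, prod_Ico_eq_prod_range]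
    refine prod_congr (by simp) fun k hk => congrArg g ?_
    simp only [mem_range] at hk
    omega
  simp_rw [hreflect]
  rw [prod_comm' (t' := Icc 1 (n - 1)) (s' := fun d => Ico d n)
    (by intro j d; simp only [mem_range, mem_Icc, mem_Ico]; omega)]
  simp only [prod_const, Nat.card_Ico]

theorem Finset.prod_range_prod_range_const {M : Type*} [CommMonoid M] (c : M) (n : ℕ) :
    ∏ j ∈ range n, ∏ _k ∈ range j, c = c ^ (n * (n - 1) / 2) := by
  simp only [prod_const, card_range]
  rw [prod_pow_eq_pow_sum, sum_range_id]

theorem Fin.prod_univ_prod_Iio {M : Type*} [CommMonoid M] (f : ℕ → ℕ → M) (n : ℕ) :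
    ∏ j : Fin n, ∏ k ∈ Iio j, f j k = ∏ j ∈ range n, ∏ k ∈ range j, f j k := by
  rw [← Fin.prod_univ_eq_prod_range (fun j => ∏ k ∈ range j, f j k)]
  refine prod_congr rfl fun j _ => ?_
  rw [← Nat.Iio_eq_range, ← Fin.map_valEmbedding_Iio, prod_map]
  rfl

theorem prod_abs_exp_diff_general (n : ℕ) :
    (∏ j : Fin n, ∏ k ∈ Finset.Iio j,
        ‖Complex.exp (Real.pi * Complex.I * (j : ℕ) / n) -
          Complex.exp (Real.pi * Complex.I * (k : ℕ) / n)‖) =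
      2 ^ (n * (n - 1) / 2) *
        ∏ j ∈ Finset.Icc 1 (n - 1), Real.sin (j * Real.pi / (2 * n)) ^ (n - j) := by
  rw [Fin.prod_univ_prod_Iio
    (fun j k => ‖Complex.exp (π * Complex.I * j / n) - Complex.exp (π * Complex.I * k / n)‖)]
  have hchord : ∀ j ∈ range n, ∀ k ∈ range j,
      ‖Complex.exp (π * Complex.I * j / n) - Complex.exp (π * Complex.I * k / n)‖ =
        2 * sin ((j - k : ℕ) * π / (2 * n)) := by
    intro j hj k hk
    simp only [mem_range] at hj hk
    exact norm_exp_pi_mul_I_div_sub_exp n hk.le (by omega)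
  rw [prod_congr rfl fun j hj => prod_congr rfl (hchord j hj), ← prod_range_prod_range_const]
  simp_rw [prod_mul_distrib]
  rw [prod_range_prod_range_sub (fun d => sin (d * π / (2 * n)))]

/-- The product over `1 ≤ k < j ≤ n` of `|exp(iπ(j-1)/n) - exp(iπ(k-1)/n)|` equals
`2^(n(n-1)/2) · ∏_{j=1}^{n-1} sin(jπ/(2n))^(n-j)`. -/
theorem prod_abs_exp_diff (n : ℕ) (hn : 0 < n) :
    (∏ j : Fin n, ∏ k ∈ Finset.Iio j,
        ‖Complex.exp (Real.pi * Complex.I * (j : ℕ) / n) -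
          Complex.exp (Real.pi * Complex.I * (k : ℕ) / n)‖) =
      2 ^ (n * (n - 1) / 2) *
        ∏ j ∈ Finset.Icc 1 (n - 1), Real.sin (j * Real.pi / (2 * n)) ^ (n - j) :=
  prod_abs_exp_diff_general n
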